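/- arXiv:2408.13404 — 7 statements merged into one kernel-verified Lean document; each statement's English description precedes it below -/
import Mathlib

section
/- For any partition μ and positive integers d, m, the product p_μ(x) · p_{dm}(x) of power-sum symmetric functions equals p_ν(x), where ν is μ with one additional part equal to dm inserted; consequently in the polysymmetric ring, multiplying a pure tensor power-sum basis element p_σ^⊗ by P_{d^m} yields Σ_{k|d} k · p_τ(k)^⊗, where τ(k) is the type obtained from σ by inserting a new part of size dm/k into the partition σ|_k. -/
open Classical

/- Single-indexed variables `x_j` (j : ℕ) for classical symmetric functions, and
doubly-indexed variables `x_{k,j}` ((k,j) : ℕ+ × ℕ, with `deg x_{k,j} = k`) for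
polysymmetric functions. -/

/-- The power-sum symmetric function `p_n = Σ_j x_j^n`. -/
noncomputable def pS (n : ℕ) : MvPowerSeries ℕ ℚ :=
  fun d => if ∃ j, d = Finsupp.single j n then 1 else 0

/-- `p_n(x_{k*}) = Σ_{j≥1} x_{k,j}^n`, the power sum in the variables `x_{k,*}`. -/
noncomputable def pIn (k : ℕ+) (n : ℕ) : MvPowerSeries (ℕ+ × ℕ) ℚ :=
  fun e => if ∃ j, e = Finsupp.single (k, j) n then 1 else 0

/-- The pure tensor power-sum basis element `p_σ^⊗ = Π_{k≥1} p_{σ|_k}(x_{k*})`,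
where the type `σ` is recorded by its partitions `σ|_k` (`σ k` is the multiset of
multiplicities of the degree-`k` blocks of `σ`). -/
noncomputable def pTensor (σ : ℕ+ → Multiset ℕ) : MvPowerSeries (ℕ+ × ℕ) ℚ :=
  ∏ᶠ k : ℕ+, ((σ k).map (pIn k)).prod

/-- `P_{d^m} = Σ_{k | d} k · p_{dm/k}(x_{k*})`. -/
noncomputable def PPb (d m : ℕ) : MvPowerSeries (ℕ+ × ℕ) ℚ :=
  ∑ k ∈ d.divisors.attach,
    (k.1 : ℚ) • pIn ⟨k.1, Nat.pos_of_mem_divisors k.2⟩ (d * m / k.1)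

/-! `p_σ^⊗` is a finitely supported product over the degrees `k`, so multiplying it by
`p_n(x_{k*})` only changes the degree-`k` factor `p_{σ|_k}(x_{k*})` into `p_{n :: σ|_k}(x_{k*})`;
`P_{d^m}` is a linear combination of such power sums. -/

theorem finprod_update_mul {α M : Type*} [DecidableEq α] [CommMonoid M] {f : α → M}
    (hf : f.HasFiniteMulSupport) (a : α) (x : M) :
    ∏ᶠ i, Function.update f a (x * f a) i = x * ∏ᶠ i, f i := by
  have hupdate : Function.update f a (x * f a) = fun i => (Pi.mulSingle a x : α → M) i * f i := by
    ext i
    rcases eq_or_ne i a with rfl | hi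
    · simp
    · simp [hi]
  have hsingle : (Pi.mulSingle a x : α → M).HasFiniteMulSupport :=
    (Set.finite_singleton a).subset Pi.mulSupport_mulSingle_subset
  rw [hupdate, finprod_mul_distrib hsingle hf,
    finprod_eq_single _ a fun i hi => by simp [hi], Pi.mulSingle_eq_same]

theorem pTensor_mul_pIn (σ : ℕ+ → Multiset ℕ) (hσfin : {k | σ k ≠ 0}.Finite)
    (k₀ : ℕ+) (n : ℕ) :
    pTensor σ * pIn k₀ n = pTensor (Function.update σ k₀ (n ::ₘ σ k₀)) := by
  have hfin : (fun k => ((σ k).map (pIn k)).prod).HasFiniteMulSupport :=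
    hσfin.subset fun k hk hσk => hk (by simp [hσk])
  simp only [pTensor, Function.apply_update (fun k (s : Multiset ℕ) => (s.map (pIn k)).prod),
    Multiset.map_cons, Multiset.prod_cons]
  rw [finprod_update_mul hfin, mul_comm]

theorem p_mul_P_block_general (mu : Multiset ℕ)
    (d m : ℕ)
    (σ : ℕ+ → Multiset ℕ) (hσfin : {k | σ k ≠ 0}.Finite) :
    ((mu.map pS).prod * pS (d * m) = (((d * m) ::ₘ mu).map pS).prod) ∧
    (pTensor σ * PPb d m = ∑ k ∈ d.divisors.attach,
      (k.1 : ℚ) • pTensor (Function.update σ ⟨k.1, Nat.pos_of_mem_divisors k.2⟩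
        ((d * m / k.1) ::ₘ σ ⟨k.1, Nat.pos_of_mem_divisors k.2⟩))) := by
  refine ⟨by rw [Multiset.map_cons, Multiset.prod_cons, mul_comm], ?_⟩
  rw [PPb, Finset.mul_sum]
  refine Finset.sum_congr rfl fun k _ => ?_
  rw [mul_smul_comm]
  exact congrArg _ (pTensor_mul_pIn σ hσfin _ _)

/-- (a) For a partition `μ` and positive integers `d, m`:
`p_μ · p_{dm} = p_ν` where `ν` is `μ` with one extra part `dm` inserted.
(b) In the polysymmetric ring, `p_σ^⊗ · P_{d^m} = Σ_{k|d} k · p_{τ(k)}^⊗`,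
where `τ(k)` is obtained from `σ` by inserting a new part `dm/k` into `σ|_k`. -/
theorem p_mul_P_block (mu : Multiset ℕ) (hmu : ∀ i ∈ mu, 0 < i)
    (d m : ℕ) (hd : 0 < d) (hm : 0 < m)
    (σ : ℕ+ → Multiset ℕ) (hσfin : {k | σ k ≠ 0}.Finite)
    (hσpos : ∀ k, ∀ i ∈ σ k, 0 < i) :
    ((mu.map pS).prod * pS (d * m) = (((d * m) ::ₘ mu).map pS).prod) ∧
    (pTensor σ * PPb d m = ∑ k ∈ d.divisors.attach,
      (k.1 : ℚ) • pTensor (Function.update σ ⟨k.1, Nat.pos_of_mem_divisors k.2⟩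
        ((d * m / k.1) ::ₘ σ ⟨k.1, Nat.pos_of_mem_divisors k.2⟩))) :=
  p_mul_P_block_general mu d m σ hσfin
end

section
/- For positive integers d and r, the polysymmetric complete homogeneous function has the power-sum expansion H_{d^r} = Σ_{τ ⊩ d} p^⊗_{τ^r} / z^⊗_τ, where the sum is over all types τ of weight d, τ^r scales every block multiplicity of τ by r, and z^⊗_τ = Π_{k≥1} z_{τ|_k}. -/
/-!
Both `H_d` and `S_d = Σ_{τ ⊩ d} p^⊗_τ / z^⊗_τ` satisfy the weighted Newton recursion
`d · F_d = Σ_{km ≤ d} k · p_m(x_{k*}) · F_{d - km}` with `F_0 = 1`, so `H_d = S_d`. For `H`, the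
right side counts the weighted degree `Σ k · e_{k,j}` of a monomial `x^e` one unit of each
exponent at a time. For `S`, it runs over the types `τ` of weight `d` with one marked block `k^m`;
as `z^⊗_τ = m · c · z^⊗_{τ ∖ k^m}`, where `c` is the multiplicity of `k^m` in `τ`, the marked blocks
contribute `Σ k · m · c = d` copies of `p^⊗_τ / z^⊗_τ`. Finally `x ↦ x^r` is the ring homomorphism
`MvPowerSeries.expand r`, which sends `p_m(x_{k*})` to `p_{rm}(x_{k*})`, hence `p^⊗_τ` to
`p^⊗_{τ^r}`.
-/

open Classical

/- Polysymmetric setting: variables `x_{k,j}` indexed by `(k, j) : ℕ+ × ℕ` with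
`deg x_{k,j} = k`.  A type is a multiset of blocks `(k, m) : ℕ+ × ℕ+` (degree `k`,
multiplicity `m`). -/

noncomputable def wdeg (e : ℕ+ × ℕ →₀ ℕ) : ℕ := e.sum fun v m => (v.1 : ℕ) * m

/-- `H_d`: the sum of all distinct monomials of weighted degree `d`. -/
noncomputable def HH (d : ℕ) : MvPowerSeries (ℕ+ × ℕ) ℚ :=
  fun e => if wdeg e = d then 1 else 0

/-- Substitution of every variable by its `r`-th power. -/
noncomputable def powSub (r : ℕ) (f : MvPowerSeries (ℕ+ × ℕ) ℚ) :
    MvPowerSeries (ℕ+ × ℕ) ℚ :=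
  fun e => if ∀ v, r ∣ e v then f (e.mapRange (· / r) (Nat.zero_div r)) else 0

noncomputable def wtT (τ : Multiset (ℕ+ × ℕ+)) : ℕ :=
  (τ.map fun b => (b.1 : ℕ) * (b.2 : ℕ)).sum

/-- `τ|_k`: the partition formed by the multiplicities of the degree-`k` blocks of `τ`. -/
noncomputable def restrict (τ : Multiset (ℕ+ × ℕ+)) (k : ℕ+) : Multiset ℕ :=
  (τ.filter fun b => b.1 = k).map fun b => (b.2 : ℕ)

/-- `z_λ = Π_i i^{m_i(λ)} m_i(λ)!`. -/
noncomputable def zMult (lam : Multiset ℕ) : ℚ :=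
  ∏ i ∈ lam.toFinset, (i : ℚ) ^ lam.count i * (Nat.factorial (lam.count i) : ℚ)

/-- `z^⊗_τ = Π_{k≥1} z_{τ|_k}`. -/
noncomputable def zT (τ : Multiset (ℕ+ × ℕ+)) : ℚ :=
  ∏ᶠ k : ℕ+, zMult (restrict τ k)

/-- `p^⊗_{τ^r} = Π_{k≥1} p_{r·(τ|_k)}(x_{k*})`: the pure tensor power sum of the
type `τ^r` obtained from `τ` by scaling every block multiplicity by `r`. -/
noncomputable def pTr (τ : Multiset (ℕ+ × ℕ+)) (r : ℕ) : MvPowerSeries (ℕ+ × ℕ) ℚ :=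
  ∏ᶠ k : ℕ+, ((restrict τ k).map fun m => pIn k (r * m)).prod

open Finset hiding restrict
open MvPowerSeries

lemma MvPowerSeries.coeff_expand {σ R : Type*} [CommRing R] (p : ℕ) (hp : p ≠ 0)
    (φ : MvPowerSeries σ R) (e : σ →₀ ℕ) :
    coeff e (expand p hp φ) =
      if ∀ i, p ∣ e i then coeff (e.mapRange (· / p) (Nat.zero_div p)) φ else 0 := by
  split_ifs with h
  · have he : p • e.mapRange (· / p) (Nat.zero_div p) = e := by
      ext i; simp [Nat.mul_div_cancel' (h i)]
    conv_lhs => rw [← he]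
    exact coeff_expand_smul p hp φ _
  · obtain ⟨i, hi⟩ := not_forall.mp h
    exact coeff_expand_of_not_dvd p hp φ hi

lemma powSub_eq_expand {r : ℕ} (hr : r ≠ 0) (f : MvPowerSeries (ℕ+ × ℕ) ℚ) :
    powSub r f = expand r hr f := by
  ext e
  rw [coeff_expand]
  rfl

lemma expand_pIn {r : ℕ} (hr : r ≠ 0) (k : ℕ+) (m : ℕ) :
    expand r hr (pIn k m) = pIn k (r * m) := by
  ext e
  by_cases hdvd : ∀ v, r ∣ e v
  · obtain ⟨e, rfl⟩ : ∃ e', r • e' = e :=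
      ⟨e.mapRange (· / r) (Nat.zero_div r), by ext v; simp [Nat.mul_div_cancel' (hdvd v)]⟩
    rw [coeff_expand_smul]
    simp only [coeff_apply, pIn, ← smul_eq_mul, ← Finsupp.smul_single,
      (nsmul_right_injective hr).eq_iff]
  · obtain ⟨v, hv⟩ := not_forall.mp hdvd
    rw [coeff_expand_of_not_dvd r hr _ hv, coeff_apply, pIn, if_neg]
    rintro ⟨j, rfl⟩
    exact hv (by rw [Finsupp.single_apply]; split_ifs <;> simp)

lemma wdeg_add (a b : ℕ+ × ℕ →₀ ℕ) : wdeg (a + b) = wdeg a + wdeg b :=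
  Finsupp.sum_add_index' (fun _ => Nat.mul_zero _) fun _ _ _ => Nat.mul_add _ _ _

lemma wdeg_single (v : ℕ+ × ℕ) (m : ℕ) : wdeg (Finsupp.single v m) = v.1 * m :=
  Finsupp.sum_single_index (Nat.mul_zero _)

lemma mul_le_wdeg (e : ℕ+ × ℕ →₀ ℕ) (v : ℕ+ × ℕ) : v.1 * e v ≤ wdeg e := by
  by_cases hv : v ∈ e.support
  · exact single_le_sum (f := fun v => (v.1 : ℕ) * e v) (fun _ _ => Nat.zero_le _) hv
  · simp [Finsupp.notMem_support_iff.mp hv]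

lemma wdeg_eq_zero_iff {e : ℕ+ × ℕ →₀ ℕ} : wdeg e = 0 ↔ e = 0 := by
  refine ⟨fun h => Finsupp.ext fun v => ?_, fun h => h ▸ rfl⟩
  have := mul_le_wdeg e v
  simp_all

lemma wdeg_sub {s e : ℕ+ × ℕ →₀ ℕ} (h : s ≤ e) : wdeg (e - s) + wdeg s = wdeg e := by
  rw [← wdeg_add, tsub_add_cancel_of_le h]

lemma coeff_HH (d : ℕ) (e : ℕ+ × ℕ →₀ ℕ) : coeff e (HH d) = if wdeg e = d then 1 else 0 := rfl

lemma coeff_pIn_mul (k : ℕ+) {m : ℕ} (hm : m ≠ 0) (g : MvPowerSeries (ℕ+ × ℕ) ℚ)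
    (e : ℕ+ × ℕ →₀ ℕ) :
    coeff e (pIn k m * g) = ∑ v ∈ e.support with v.1 = k ∧ m ≤ e v,
      coeff (e - Finsupp.single v m) g := by
  rw [coeff_mul]
  symm
  refine sum_bij_ne_zero (fun v _ _ => (Finsupp.single v m, e - Finsupp.single v m)) ?_ ?_ ?_ ?_
  · intro v hv _
    rw [mem_filter] at hv
    rw [Finset.HasAntidiagonal.mem_antidiagonal]
    exact add_tsub_cancel_of_le (Finsupp.single_le_iff.mpr hv.2.2)
  · intro v _ _ w _ _ h
    exact Finsupp.single_left_injective hm (congrArg Prod.fst h)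
  · rintro ⟨a, b⟩ hab hne
    rw [Finset.HasAntidiagonal.mem_antidiagonal] at hab
    obtain ⟨j, rfl⟩ : ∃ j, a = Finsupp.single (k, j) m := by
      by_contra h
      exact hne (by simp [pIn, coeff_apply, h])
    obtain rfl : b = e - Finsupp.single (k, j) m := by rw [← hab, add_tsub_cancel_left]
    have hle : m ≤ e (k, j) := Finsupp.single_le_iff.mp (hab ▸ le_self_add)
    refine ⟨(k, j), mem_filter.mpr ⟨?_, rfl, hle⟩, right_ne_zero_of_mul hne, rfl⟩
    rw [Finsupp.mem_support_iff]
    omega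
  · intro v hv _
    rw [mem_filter] at hv
    rw [coeff_apply (pIn k m), pIn, if_pos ⟨v.2, by rw [← hv.2.1]⟩, one_mul]

noncomputable def blocksOfWeightLE (d : ℕ) : Finset (ℕ+ × ℕ+) :=
  {b ∈ Icc 1 d.toPNat' ×ˢ Icc 1 d.toPNat' | (b.1 : ℕ) * b.2 ≤ d}

lemma mem_blocksOfWeightLE {d : ℕ} {b : ℕ+ × ℕ+} :
    b ∈ blocksOfWeightLE d ↔ (b.1 : ℕ) * b.2 ≤ d := by
  refine mem_filter.trans (and_iff_right_of_imp fun h => ?_)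
  have hd : 0 < d := lt_of_lt_of_le (Nat.mul_pos b.1.pos b.2.pos) h
  simp only [mem_product, mem_Icc, ← PNat.coe_le_coe, PNat.toPNat'_coe hd, PNat.one_coe]
  exact ⟨⟨b.1.pos, (Nat.le_mul_of_pos_right _ b.2.pos).trans h⟩,
    ⟨b.2.pos, (Nat.le_mul_of_pos_left _ b.1.pos).trans h⟩⟩

lemma card_filter_blocksOfWeightLE {d : ℕ} {k : ℕ+} {n : ℕ} (h : k * n ≤ d) :
    #{b ∈ blocksOfWeightLE d | k = b.1 ∧ (b.2 : ℕ) ≤ n} = n := by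
  conv_rhs => rw [← Nat.add_sub_cancel n 1, ← Nat.card_Icc]
  refine card_nbij' (fun b => b.2) (fun m => (k, m.toPNat')) ?_ ?_ ?_ ?_
  · intro b hb
    simp only [coe_filter, Set.mem_ofPred_eq] at hb
    exact mem_Icc.mpr ⟨b.2.pos, hb.2.2⟩
  · intro m hm
    simp only [coe_Icc, Set.mem_Icc] at hm
    simp only [coe_filter, Set.mem_ofPred_eq, mem_blocksOfWeightLE, PNat.toPNat'_coe hm.1, hm.2,
      and_true]
    exact (Nat.mul_le_mul_left _ hm.2).trans h
  · intro b hb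
    simp only [coe_filter, Set.mem_ofPred_eq] at hb
    exact Prod.ext hb.2.1 (PNat.coe_toPNat' b.2)
  · intro m hm
    simp only [coe_Icc, Set.mem_Icc] at hm
    exact PNat.toPNat'_coe hm.1

lemma sum_mul_card_blocksOfWeightLE (e : ℕ+ × ℕ →₀ ℕ) :
    ∑ b ∈ blocksOfWeightLE (wdeg e), (b.1 : ℕ) * #{v ∈ e.support | v.1 = b.1 ∧ (b.2 : ℕ) ≤ e v}
      = wdeg e := by
  calc _ = ∑ v ∈ e.support, ∑ b ∈ blocksOfWeightLE (wdeg e),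
        if v.1 = b.1 ∧ (b.2 : ℕ) ≤ e v then (v.1 : ℕ) else 0 := by
        rw [sum_comm]
        refine sum_congr rfl fun b _ => ?_
        rw [card_filter, mul_sum]
        refine sum_congr rfl fun v _ => ?_
        split_ifs with h
        · rw [h.1, mul_one]
        · rw [mul_zero]
    _ = ∑ v ∈ e.support, v.1 * e v := by
        refine sum_congr rfl fun v _ => ?_
        rw [← sum_filter, sum_const, card_filter_blocksOfWeightLE (mul_le_wdeg e v), smul_eq_mul,
          mul_comm]
    _ = wdeg e := rfl

lemma coeff_pIn_mul_HH {d : ℕ} {b : ℕ+ × ℕ+} (hb : (b.1 : ℕ) * b.2 ≤ d) (e : ℕ+ × ℕ →₀ ℕ) :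
    coeff e (pIn b.1 b.2 * HH (d - b.1 * b.2))
      = #{v ∈ e.support | v.1 = b.1 ∧ (b.2 : ℕ) ≤ e v} * coeff e (HH d) := by
  rw [coeff_pIn_mul _ b.2.ne_zero, card_eq_sum_ones, Nat.cast_sum, sum_mul]
  refine sum_congr rfl fun v hv => ?_
  rw [mem_filter] at hv
  have hw := wdeg_sub (Finsupp.single_le_iff.mpr hv.2.2)
  rw [wdeg_single, hv.2.1] at hw
  simp only [coeff_HH, Nat.cast_one, one_mul]
  exact if_congr (by omega) rfl rfl

lemma HH_recursion (d : ℕ) :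
    (d : ℚ) • HH d
      = ∑ b ∈ blocksOfWeightLE d, (b.1 : ℚ) • (pIn b.1 b.2 * HH (d - b.1 * b.2)) := by
  ext e
  simp only [map_sum, coeff_smul]
  rw [sum_congr rfl fun b hb => by rw [coeff_pIn_mul_HH (mem_blocksOfWeightLE.mp hb)]]
  by_cases he : wdeg e = d
  · subst he
    simp only [coeff_HH, if_true, mul_one]
    exact_mod_cast (sum_mul_card_blocksOfWeightLE e).symm
  · simp [coeff_HH, he]

lemma wtT_cons (b : ℕ+ × ℕ+) (τ : Multiset (ℕ+ × ℕ+)) :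
    wtT (b ::ₘ τ) = b.1 * b.2 + wtT τ := by
  simp [wtT]

lemma mul_le_wtT {b : ℕ+ × ℕ+} {τ : Multiset (ℕ+ × ℕ+)} (hb : b ∈ τ) : b.1 * b.2 ≤ wtT τ := by
  rw [← Multiset.cons_erase hb, wtT_cons]
  exact Nat.le_add_right _ _

lemma card_le_wtT (τ : Multiset (ℕ+ × ℕ+)) : Multiset.card τ ≤ wtT τ := by
  induction τ using Multiset.induction_on with
  | empty => rfl
  | cons b τ ih =>
    rw [Multiset.card_cons, wtT_cons]
    have := Nat.mul_pos b.1.pos b.2.pos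
    omega

lemma finite_setOf_wtT_eq (d : ℕ) : {τ : Multiset (ℕ+ × ℕ+) | wtT τ = d}.Finite := by
  refine (d • (blocksOfWeightLE d).val).powerset.toFinset.finite_toSet.subset fun τ hτ => ?_
  simp only [Set.mem_ofPred_eq] at hτ
  simp only [mem_coe, Multiset.mem_toFinset, Multiset.mem_powerset, Multiset.le_iff_count,
    Multiset.count_nsmul]
  intro b
  by_cases hb : b ∈ τ
  · have hbB : b ∈ blocksOfWeightLE d := mem_blocksOfWeightLE.mpr (hτ ▸ mul_le_wtT hb)
    rw [Multiset.count_eq_one_of_mem (blocksOfWeightLE d).nodup hbB, mul_one]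
    exact (Multiset.count_le_card _ _).trans (hτ ▸ card_le_wtT τ)
  · simp [Multiset.count_eq_zero_of_notMem hb]

noncomputable def typesOfWeight (d : ℕ) : Finset (Multiset (ℕ+ × ℕ+)) :=
  (finite_setOf_wtT_eq d).toFinset

lemma mem_typesOfWeight {d : ℕ} {τ : Multiset (ℕ+ × ℕ+)} : τ ∈ typesOfWeight d ↔ wtT τ = d :=
  Set.Finite.mem_toFinset _

lemma typesOfWeight_zero : typesOfWeight 0 = {0} := by
  ext τ
  rw [mem_typesOfWeight, mem_singleton]
  refine ⟨fun h => Multiset.eq_zero_of_forall_notMem fun b hb => ?_, fun h => h ▸ rfl⟩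
  have := mul_le_wtT hb
  have := Nat.mul_pos b.1.pos b.2.pos
  omega

lemma sum_blocksOfWeightLE_sum_typesOfWeight {M : Type*} [AddCommMonoid M] (d : ℕ)
    (F : ℕ+ × ℕ+ → Multiset (ℕ+ × ℕ+) → M) :
    ∑ b ∈ blocksOfWeightLE d, ∑ σ ∈ typesOfWeight (d - b.1 * b.2), F b σ
      = ∑ τ ∈ typesOfWeight d, ∑ b ∈ τ.toFinset, F b (τ.erase b) := by
  rw [sum_sigma', sum_sigma']
  refine sum_nbij' (fun p => ⟨p.1 ::ₘ p.2, p.1⟩) (fun q => ⟨q.2, q.1.erase q.2⟩) ?_ ?_ ?_ ?_ ?_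
  · rintro ⟨b, σ⟩ h
    simp only [mem_sigma, mem_blocksOfWeightLE, mem_typesOfWeight] at h ⊢
    refine ⟨by rw [wtT_cons]; omega, Multiset.mem_toFinset.mpr (Multiset.mem_cons_self _ _)⟩
  · rintro ⟨τ, b⟩ h
    simp only [mem_sigma, mem_blocksOfWeightLE, mem_typesOfWeight, Multiset.mem_toFinset] at h ⊢
    have := wtT_cons b (τ.erase b)
    rw [Multiset.cons_erase h.2] at this
    omega
  · rintro ⟨b, σ⟩ -
    simp
  · rintro ⟨τ, b⟩ h
    simp only [mem_sigma, Multiset.mem_toFinset] at h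
    simp [Multiset.cons_erase h.2]
  · rintro ⟨b, σ⟩ -
    simp

lemma restrict_cons (b : ℕ+ × ℕ+) (τ : Multiset (ℕ+ × ℕ+)) (k : ℕ+) :
    restrict (b ::ₘ τ) k = if b.1 = k then (b.2 : ℕ) ::ₘ restrict τ k else restrict τ k := by
  unfold restrict
  split_ifs with h <;> simp [h]

lemma count_restrict (τ : Multiset (ℕ+ × ℕ+)) (b : ℕ+ × ℕ+) :
    (restrict τ b.1).count (b.2 : ℕ) = τ.count b := by
  rw [restrict, Multiset.count_map, Multiset.filter_filter, Multiset.count_eq_card_filter_eq]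
  congr 1
  refine Multiset.filter_congr fun x _ => ?_
  rw [Prod.ext_iff, PNat.coe_inj]
  tauto

lemma finprod_restrict_cons {M : Type*} [CommMonoid M] {f : ℕ+ → Multiset ℕ → M}
    (hf : ∀ k, f k 0 = 1) (b : ℕ+ × ℕ+) (τ : Multiset (ℕ+ × ℕ+)) {c : M}
    (hc : f b.1 (b.2 ::ₘ restrict τ b.1) = c * f b.1 (restrict τ b.1)) :
    ∏ᶠ k, f k (restrict (b ::ₘ τ) k) = c * ∏ᶠ k, f k (restrict τ k) := by
  have hcons (k : ℕ+) :
      f k (restrict (b ::ₘ τ) k) = (Pi.mulSingle b.1 c : ℕ+ → M) k * f k (restrict τ k) := by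
    rw [restrict_cons]
    by_cases h : b.1 = k
    · subst h; simp [hc]
    · simp [h, Ne.symm h]
  have hfin : (Function.mulSupport fun k => f k (restrict τ k)).Finite := by
    refine (τ.toFinset.image Prod.fst).finite_toSet.subset fun k hk => ?_
    by_contra hkτ
    refine hk ?_
    simp only [restrict]
    rw [Multiset.filter_eq_nil.mpr, Multiset.map_zero, hf]
    intro b hb hbk
    exact hkτ (by simpa using ⟨b.2, hbk ▸ hb⟩)
  rw [finprod_congr hcons, finprod_mul_distrib ((Set.finite_singleton b.1).subset
    Pi.mulSupport_mulSingle_subset) hfin, finprod_eq_single _ b.1 fun k hk => ?_]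
  · simp
  · simp [hk]

lemma zMult_eq_prod_of_subset {lam : Multiset ℕ} {s : Finset ℕ} (hs : lam.toFinset ⊆ s) :
    zMult lam = ∏ i ∈ s, (i : ℚ) ^ lam.count i * (lam.count i).factorial := by
  refine prod_subset hs fun i _ hi => ?_
  simp [Multiset.count_eq_zero_of_notMem (mt Multiset.mem_toFinset.mpr hi)]

lemma zMult_cons (m : ℕ) (lam : Multiset ℕ) :
    zMult (m ::ₘ lam) = m * (lam.count m + 1) * zMult lam := by
  have hm : m ∈ insert m lam.toFinset := mem_insert_self _ _
  rw [zMult_eq_prod_of_subset (s := insert m lam.toFinset) (by simp),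
    zMult_eq_prod_of_subset (subset_insert m _),
    ← mul_prod_erase _ _ hm, ← mul_prod_erase _ _ hm, Multiset.count_cons_self,
    prod_congr rfl fun i hi => by rw [Multiset.count_cons_of_ne (ne_of_mem_erase hi)]]
  push_cast [pow_succ, Nat.factorial_succ]
  ring

lemma zT_cons (b : ℕ+ × ℕ+) (τ : Multiset (ℕ+ × ℕ+)) :
    zT (b ::ₘ τ) = b.2 * (τ.count b + 1) * zT τ :=
  finprod_restrict_cons (f := fun _ => zMult) (fun _ => by simp [zMult]) b τ
    (by rw [zMult_cons, count_restrict])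

lemma pTr_cons (b : ℕ+ × ℕ+) (τ : Multiset (ℕ+ × ℕ+)) (r : ℕ) :
    pTr (b ::ₘ τ) r = pIn b.1 (r * b.2) * pTr τ r :=
  finprod_restrict_cons (f := fun k lam => (lam.map fun m => pIn k (r * m)).prod)
    (fun _ => by simp) b τ (by simp)

lemma zT_zero : zT 0 = 1 := by
  simp [zT, restrict, zMult]

lemma pTr_zero (r : ℕ) : pTr 0 r = 1 := by
  simp [pTr, restrict]

lemma zT_pos (τ : Multiset (ℕ+ × ℕ+)) : 0 < zT τ := by
  induction τ using Multiset.induction_on with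
  | empty => simp [zT_zero]
  | cons b τ ih =>
    rw [zT_cons]
    positivity

lemma expand_pTr {r : ℕ} (hr : r ≠ 0) (τ : Multiset (ℕ+ × ℕ+)) :
    expand r hr (pTr τ 1) = pTr τ r := by
  induction τ using Multiset.induction_on with
  | empty => rw [pTr_zero, pTr_zero, map_one]
  | cons b τ ih => rw [pTr_cons, pTr_cons, map_mul, ih, expand_pIn, one_mul]

lemma smul_pIn_mul_pTr_erase {τ : Multiset (ℕ+ × ℕ+)} {b : ℕ+ × ℕ+} (hb : b ∈ τ) :
    (b.1 : ℚ) • (pIn b.1 b.2 * ((zT (τ.erase b))⁻¹ • pTr (τ.erase b) 1))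
      = (b.1 * b.2 * τ.count b : ℚ) • ((zT τ)⁻¹ • pTr τ 1) := by
  obtain ⟨σ, rfl⟩ : ∃ σ, τ = b ::ₘ σ := ⟨τ.erase b, (Multiset.cons_erase hb).symm⟩
  rw [Multiset.erase_cons_head, pTr_cons, zT_cons, Multiset.count_cons_self, one_mul,
    mul_smul_comm, smul_smul, smul_smul]
  congr 1
  have := zT_pos σ
  field_simp
  push_cast
  ring

noncomputable def powerSumExpansion (d r : ℕ) : MvPowerSeries (ℕ+ × ℕ) ℚ :=
  ∑ τ ∈ typesOfWeight d, (zT τ)⁻¹ • pTr τ r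

lemma powerSumExpansion_recursion (d : ℕ) :
    ∑ b ∈ blocksOfWeightLE d, (b.1 : ℚ) • (pIn b.1 b.2 * powerSumExpansion (d - b.1 * b.2) 1)
      = (d : ℚ) • powerSumExpansion d 1 := by
  simp only [powerSumExpansion, mul_sum, smul_sum]
  rw [sum_blocksOfWeightLE_sum_typesOfWeight]
  refine sum_congr rfl fun τ hτ => ?_
  rw [sum_congr rfl fun b hb => smul_pIn_mul_pTr_erase (Multiset.mem_toFinset.mp hb), ← sum_smul,
    ← mem_typesOfWeight.mp hτ]
  congr 1
  simp only [wtT, Finset.sum_multiset_map_count, Nat.cast_sum, nsmul_eq_mul]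
  push_cast
  exact sum_congr rfl fun b _ => by ring

lemma HH_eq_powerSumExpansion (d : ℕ) : HH d = powerSumExpansion d 1 := by
  induction d using Nat.strong_induction_on with
  | _ d ih =>
    rcases Nat.eq_zero_or_pos d with rfl | hd
    · ext e
      simp [powerSumExpansion, typesOfWeight_zero, zT_zero, pTr_zero, coeff_HH, coeff_one,
        wdeg_eq_zero_iff]
    · have hrec : (d : ℚ) • HH d = (d : ℚ) • powerSumExpansion d 1 := by
        rw [HH_recursion, ← powerSumExpansion_recursion]
        refine sum_congr rfl fun b _ => ?_
        rw [ih _ (Nat.sub_lt hd (Nat.mul_pos b.1.pos b.2.pos))]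
      exact smul_right_injective _ (Nat.cast_ne_zero.mpr hd.ne') hrec

lemma expand_powerSumExpansion {r : ℕ} (hr : r ≠ 0) (d : ℕ) :
    expand r hr (powerSumExpansion d 1) = powerSumExpansion d r := by
  simp only [powerSumExpansion, map_sum, map_smul, expand_pTr]

lemma powerSumExpansion_eq_finsum (d r : ℕ) :
    powerSumExpansion d r
      = ∑ᶠ τ : {τ : Multiset (ℕ+ × ℕ+) // wtT τ = d}, (zT τ.1)⁻¹ • pTr τ.1 r := by
  have : Fintype {τ : Multiset (ℕ+ × ℕ+) // wtT τ = d} := (finite_setOf_wtT_eq d).fintype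
  rw [finsum_eq_sum_of_fintype, powerSumExpansion,
    sum_subtype _ (fun _ => mem_typesOfWeight) fun τ => (zT τ)⁻¹ • pTr τ r]

theorem H_block_in_pTensor_general (d r : ℕ) (hr : 0 < r) :
    powSub r (HH d)
      = ∑ᶠ τ : {τ : Multiset (ℕ+ × ℕ+) // wtT τ = d}, (zT τ.1)⁻¹ • pTr τ.1 r := by
  rw [powSub_eq_expand hr.ne', HH_eq_powerSumExpansion, expand_powerSumExpansion,
    powerSumExpansion_eq_finsum]

/-- For positive integers `d, r`:
`H_{d^r} = Σ_{τ ⊩ d} p^⊗_{τ^r} / z^⊗_τ`, the sum over all types `τ` of weight `d`. -/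
theorem H_block_in_pTensor (d r : ℕ) (hd : 0 < d) (hr : 0 < r) :
    powSub r (HH d)
      = ∑ᶠ τ : {τ : Multiset (ℕ+ × ℕ+) // wtT τ = d}, (zT τ.1)⁻¹ • pTr τ.1 r :=
  H_block_in_pTensor_general d r hr
end

section
/- For partitions λ and μ and a sequence of positive integers α = (α_1,…,α_s), the coefficient of the monomial symmetric function m_λ in the product m_μ · p_{α_1}⋯p_{α_s} equals the number of p-brick tabloids of shape λ and extended content (μ;α): tilings of the Young diagram of λ by horizontal bricks consisting of ℓ(μ) bricks labeled 0 of lengths μ_1,…,μ_{ℓ(μ)} and, for each 1 ≤ i ≤ s, one brick labeled i of length α_i, such that every cell is covered exactly once and brick labels strictly increase left to right within each row. -/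
open Classical

/-- The monomial symmetric function `m_μ`: the sum of all distinct monomials whose
multiset of (nonzero) exponents is `μ`. -/
noncomputable def mS (mu : Multiset ℕ) : MvPowerSeries ℕ ℚ :=
  fun d => if d.support.val.map (fun j => d j) = mu then 1 else 0

/-! Both sides count the same objects through generating functions. `m_μ` is the generating
function of the exponent vectors `d` with content `μ`, `p_a` (for `a > 0`) that of the vectors
`a • e_j`, and the coefficients of a product count pairs whose weights add up. So the coefficient
of `x^L` in `m_μ ∏ p_{α_i}` counts the pairs `(d, row)` with `d + ∑ i, α_i • e_{row i} = L`,
which are the encoded p-brick tabloids: `d j` is the `0`-brick of row `j`, brick `i` lies in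
row `row i`. -/

open MvPowerSeries Finset.HasAntidiagonal

section GeneratingFunction

variable {σ R : Type*} [CommSemiring R] {Y Z : Type*}

-- Finiteness of the fibres is part of the notion because `Nat.card` of an infinite type is `0`.
def IsGeneratingFunction (F : MvPowerSeries σ R) (w : Y → σ →₀ ℕ) : Prop :=
  ∀ e, Finite {y // w y = e} ∧ coeff e F = Nat.card {y // w y = e}

theorem isGeneratingFunction_of_injective {F : MvPowerSeries σ R} {w : Y → σ →₀ ℕ}
    (hw : w.Injective) (hF : ∀ e, coeff e F = if e ∈ Set.range w then 1 else 0) :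
    IsGeneratingFunction F w := by
  intro e
  have : Subsingleton {y // w y = e} := ⟨fun a b => Subtype.ext (hw (a.2.trans b.2.symm))⟩
  refine ⟨inferInstance, ?_⟩
  rw [hF]
  split_ifs with he
  · obtain ⟨y, hy⟩ := he
    rw [Nat.card_of_subsingleton (⟨y, hy⟩ : {y // w y = e}), Nat.cast_one]
  · have : IsEmpty {y // w y = e} := ⟨fun y => he ⟨y.1, y.2⟩⟩
    rw [Nat.card_of_isEmpty, Nat.cast_zero]

theorem IsGeneratingFunction.comp_equiv {F : MvPowerSeries σ R} {w : Y → σ →₀ ℕ}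
    (h : IsGeneratingFunction F w) (f : Z ≃ Y) : IsGeneratingFunction F (w ∘ f) := by
  intro e
  have hf : {z // w (f z) = e} ≃ {y // w y = e} := f.subtypeEquiv fun _ => Iff.rfl
  exact ⟨hf.finite_iff.2 (h e).1, by rw [(h e).2, Function.comp_def, Nat.card_congr hf]⟩

def fiberAddEquiv [DecidableEq σ] (v : Y → σ →₀ ℕ) (w : Z → σ →₀ ℕ) (e : σ →₀ ℕ) :
    {p : Y × Z // v p.1 + w p.2 = e} ≃
      Σ q : antidiagonal e, {y // v y = q.1.1} × {z // w z = q.1.2} where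
  toFun p := ⟨⟨(v p.1.1, w p.1.2), mem_antidiagonal.2 p.2⟩, ⟨p.1.1, rfl⟩, ⟨p.1.2, rfl⟩⟩
  invFun q := ⟨(q.2.1.1, q.2.2.1), by rw [q.2.1.2, q.2.2.2]; exact mem_antidiagonal.1 q.1.2⟩
  left_inv _ := rfl
  right_inv := by
    rintro ⟨⟨⟨a, b⟩, hab⟩, ⟨y, hy⟩, ⟨z, hz⟩⟩
    dsimp only at hy hz
    subst hy hz
    rfl

theorem IsGeneratingFunction.mul {F G : MvPowerSeries σ R} {v : Y → σ →₀ ℕ} {w : Z → σ →₀ ℕ}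
    (hF : IsGeneratingFunction F v) (hG : IsGeneratingFunction G w) :
    IsGeneratingFunction (F * G) (fun p : Y × Z => v p.1 + w p.2) := by
  classical
  intro e
  have : ∀ a, Finite {y // v y = a} := fun a => (hF a).1
  have : ∀ b, Finite {z // w z = b} := fun b => (hG b).1
  refine ⟨(fiberAddEquiv v w e).finite_iff.2 inferInstance, ?_⟩
  rw [Nat.card_congr (fiberAddEquiv v w e), Nat.card_sigma, coeff_mul,
    ← Finset.sum_coe_sort (antidiagonal e)]
  push_cast [Nat.card_prod]
  exact Finset.sum_congr rfl fun q _ => by rw [(hF _).2, (hG _).2]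

theorem isGeneratingFunction_one [Unique Y] :
    IsGeneratingFunction (1 : MvPowerSeries σ R) (fun _ : Y => 0) := by
  classical
  refine isGeneratingFunction_of_injective (Function.injective_of_subsingleton _) fun e => ?_
  simp [coeff_one]

theorem isGeneratingFunction_prod {s : ℕ} {X : Fin s → Type*} {F : Fin s → MvPowerSeries σ R}
    {w : ∀ i, X i → σ →₀ ℕ} (h : ∀ i, IsGeneratingFunction (F i) (w i)) :
    IsGeneratingFunction (∏ i, F i) (fun x : ∀ i, X i => ∑ i, w i (x i)) := by
  induction s with
  | zero => simpa using isGeneratingFunction_one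
  | succ s ih =>
    have := ((h 0).mul (ih fun i => h i.succ)).comp_equiv (Fin.consEquiv X).symm
    rw [Fin.prod_univ_succ]
    convert this using 1
    funext x
    simp [Fin.sum_univ_succ, Fin.tail]

end GeneratingFunction

theorem isGeneratingFunction_pS {n : ℕ} (hn : 0 < n) :
    IsGeneratingFunction (pS n) (fun j => Finsupp.single j n) :=
  isGeneratingFunction_of_injective (Finsupp.single_left_injective hn.ne') fun e => by
    simp only [Set.mem_range, eq_comm]
    rfl

theorem isGeneratingFunction_mS (mu : Multiset ℕ) :
    IsGeneratingFunction (mS mu)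
      (Subtype.val : {d : ℕ →₀ ℕ // d.support.val.map (fun j => d j) = mu} → ℕ →₀ ℕ) :=
  isGeneratingFunction_of_injective Subtype.val_injective fun e => by
    simp only [Subtype.range_coe_subtype, Set.mem_ofPred_eq]
    rfl

section SumSingle

variable {ι κ M : Type*} [Fintype ι] [DecidableEq κ] [AddCommMonoid M]

theorem sum_single_apply (α : ι → M) (row : ι → κ) (j : κ) :
    (∑ i, Finsupp.single (row i) (α i)) j = ∑ i ∈ Finset.univ.filter (fun i => row i = j), α i := by
  rw [Finsupp.finsetSum_apply, Finset.sum_filter]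
  exact Finset.sum_congr rfl fun i _ => Finsupp.single_apply

theorem add_sum_single_eq_iff (α : ι → M) (d L : κ →₀ M) (row : ι → κ) :
    d + ∑ i, Finsupp.single (row i) (α i) = L ↔
      ∀ j, d j + ∑ i ∈ Finset.univ.filter (fun i => row i = j), α i = L j := by
  simp only [Finsupp.ext_iff, Finsupp.add_apply, sum_single_apply]

end SumSingle

/-- A p-brick tabloid of shape `L` (row `j` of the diagram has `L j` cells) and
extended content `(μ; α)` is encoded by: `g : ℕ →₀ ℕ`, where `g j` is the length of
the (at most one) `0`-labeled brick in row `j` (`0` meaning no such brick), and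
`row : Fin s → ℕ`, where `row i` is the row containing the unique brick labeled
`i+1` (of length `α i`).  Labels strictly increase from left to right within a row,
so this data determines the tiling. -/
theorem coeff_m_mul_prod_p_eq_card_pBrickTabloids_general
    (mu : Multiset ℕ)
    (s : ℕ) (α : Fin s → ℕ) (hα : ∀ i, 0 < α i)
    (L : ℕ →₀ ℕ) :
    MvPowerSeries.coeff L (mS mu * ∏ i, pS (α i))
      = (Nat.card {T : (ℕ →₀ ℕ) × (Fin s → ℕ) //
          T.1.support.val.map (fun j => T.1 j) = mu ∧
          ∀ j, T.1 j + ∑ i ∈ Finset.univ.filter (fun i => T.2 i = j), α i = L j} : ℚ) := by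
  have hgen := (isGeneratingFunction_mS mu).mul
    (isGeneratingFunction_prod fun i => isGeneratingFunction_pS (hα i))
  rw [(hgen L).2]
  congr 1
  exact Nat.card_congr
    { toFun := fun T => ⟨(T.1.1.1, T.1.2), T.1.1.2, (add_sum_single_eq_iff α _ L _).1 T.2⟩
      invFun := fun T => ⟨(⟨T.1.1, T.2.1⟩, T.1.2), (add_sum_single_eq_iff α _ L _).2 T.2.2⟩
      left_inv := fun _ => rfl
      right_inv := fun _ => rfl }

/-- A p-brick tabloid of shape `L` (row `j` of the diagram has `L j` cells) and
extended content `(μ; α)` is encoded by: `g : ℕ →₀ ℕ`, where `g j` is the length of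
the (at most one) `0`-labeled brick in row `j` (`0` meaning no such brick), and
`row : Fin s → ℕ`, where `row i` is the row containing the unique brick labeled
`i+1` (of length `α i`).  The multiset of lengths of `0`-bricks must be `μ`, and in
each row the brick lengths must add up to the row length.  (Labels strictly
increase from left to right within a row, so this data determines the tiling.) -/
theorem coeff_m_mul_prod_p_eq_card_pBrickTabloids
    (lam mu : Multiset ℕ) (hlam : 0 ∉ lam) (hmu : 0 ∉ mu)
    (s : ℕ) (α : Fin s → ℕ) (hα : ∀ i, 0 < α i)
    (L : ℕ →₀ ℕ) (hL : L.support.val.map (fun j => L j) = lam) :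
    MvPowerSeries.coeff L (mS mu * ∏ i, pS (α i))
      = (Nat.card {T : (ℕ →₀ ℕ) × (Fin s → ℕ) //
          T.1.support.val.map (fun j => T.1 j) = mu ∧
          ∀ j, T.1 j + ∑ i ∈ Finset.univ.filter (fun i => T.2 i = j), α i = L j} : ℚ) :=
  coeff_m_mul_prod_p_eq_card_pBrickTabloids_general mu s α hα L
end

section
/- For partitions λ, μ and a sequence of positive integers α = (α_1,…,α_s), the coefficient of m_λ in m_μ · h_{α_1}⋯h_{α_s} equals the number of h-brick tabloids of shape λ and extended content (μ;α): tilings of the diagram of λ by ℓ(μ) horizontal bricks labeled 0 of lengths μ_1,…,μ_{ℓ(μ)} together with, for each 1 ≤ i ≤ s, exactly α_i unit (1×1) bricks labeled i, covering each cell exactly once, with brick labels weakly increasing left to right in each row and at most one 0-labeled brick per row. -/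
/- Both `m_μ` and `h_k` are indicator series of a set of exponent vectors, so the coefficient
of `x^L` in a product of them counts the ways of writing `L` as a sum of exponent vectors, one
from each factor. Reading the vector chosen from `m_μ` as the lengths of the `0`-bricks and the
vector chosen from `h_{α_i}` as the numbers of `i`-bricks in each row, these decompositions are
exactly the h-brick tabloids. -/

open Classical

/-- The complete homogeneous symmetric function `h_n`: the sum of all monomials of
degree `n`. -/
noncomputable def hS (n : ℕ) : MvPowerSeries ℕ ℚ :=
  fun d => if d.sum (fun _ m => m) = n then 1 else 0

namespace MvPowerSeries

variable {σ ι R : Type*} [CommSemiring R]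

variable (R) in
noncomputable def indicatorSeries (P : (σ →₀ ℕ) → Prop) : MvPowerSeries σ R :=
  fun d => if P d then 1 else 0

theorem coeff_indicatorSeries (P : (σ →₀ ℕ) → Prop) (d : σ →₀ ℕ) :
    coeff d (indicatorSeries R P) = if P d then 1 else 0 :=
  rfl

theorem coeff_prod_indicatorSeries [Fintype ι] (P : ι → (σ →₀ ℕ) → Prop) (d : σ →₀ ℕ) :
    coeff d (∏ i, indicatorSeries R (P i))
      = Nat.card {c : ι → σ →₀ ℕ // ∑ i, c i = d ∧ ∀ i, P i (c i)} := by
  rw [coeff_prod]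
  simp only [coeff_indicatorSeries, Finset.prod_boole, Finset.mem_univ, forall_const]
  rw [Finset.sum_boole, ← Fintype.card_coe, ← Nat.card_eq_fintype_card]
  congr 1
  refine Nat.card_congr (Finsupp.equivFunOnFinite.subtypeEquiv fun l => ?_)
  simp [Finset.mem_finsuppAntidiag, Finsupp.equivFunOnFinite]

end MvPowerSeries

open MvPowerSeries

theorem hS_eq_indicatorSeries (n : ℕ) :
    hS n = indicatorSeries ℚ fun d => d.sum (fun _ m => m) = n :=
  funext fun _ => by unfold hS indicatorSeries; congr

theorem mS_eq_indicatorSeries (mu : Multiset ℕ) :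
    mS mu = indicatorSeries ℚ fun d => d.support.val.map (fun j => d j) = mu :=
  funext fun _ => by unfold mS indicatorSeries; congr

theorem coeff_m_mul_prod_h_eq_card_hBrickTabloids_general
    (mu : Multiset ℕ)
    (s : ℕ) (α : Fin s → ℕ)
    (L : ℕ →₀ ℕ) :
    MvPowerSeries.coeff L (mS mu * ∏ i, hS (α i))
      = (Nat.card {T : (ℕ →₀ ℕ) × (Fin s → ℕ →₀ ℕ) //
          T.1.support.val.map (fun j => T.1 j) = mu ∧
          (∀ i, (T.2 i).sum (fun _ c => c) = α i) ∧
          ∀ j, T.1 j + ∑ i, T.2 i j = L j} : ℚ) := by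
  let P : Option (Fin s) → (ℕ →₀ ℕ) → Prop := fun i d =>
    i.elim (d.support.val.map (fun j => d j) = mu) (fun i => d.sum (fun _ m => m) = α i)
  have hprod : mS mu * ∏ i, hS (α i) = ∏ i, indicatorSeries ℚ (P i) := by
    rw [Fintype.prod_option]
    exact congr_arg₂ _ (mS_eq_indicatorSeries mu)
      (Finset.prod_congr rfl fun i _ => hS_eq_indicatorSeries (α i))
  rw [hprod, coeff_prod_indicatorSeries]
  congr 1
  refine Nat.card_congr (Equiv.piOptionEquivProd.subtypeEquiv fun c => ?_)
  simp only [P, Equiv.piOptionEquivProd_apply, Fintype.sum_option, Option.forall,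
    Option.elim_none, Option.elim_some, Finsupp.ext_iff, Finsupp.coe_add, Finsupp.coe_finsetSum,
    Pi.add_apply, Finset.sum_apply]
  tauto

/-- An h-brick tabloid of shape `L` (row `j` has `L j` cells) and extended content
`(μ; α)` is encoded by: `g : ℕ →₀ ℕ`, where `g j` is the length of the at most one
`0`-labeled brick in row `j` (`0` = none), and `c : Fin s → (ℕ →₀ ℕ)`, where
`c i j` is the number of unit bricks labeled `i+1` placed in row `j`.  There are
`α i` unit bricks labeled `i+1` in total, the multiset of `0`-brick lengths is
`μ`, and the bricks in each row exactly cover it.  (Labels weakly increase from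
left to right within a row, so this data determines the tiling.) -/
theorem coeff_m_mul_prod_h_eq_card_hBrickTabloids
    (lam mu : Multiset ℕ) (hlam : 0 ∉ lam) (hmu : 0 ∉ mu)
    (s : ℕ) (α : Fin s → ℕ) (hα : ∀ i, 0 < α i)
    (L : ℕ →₀ ℕ) (hL : L.support.val.map (fun j => L j) = lam) :
    MvPowerSeries.coeff L (mS mu * ∏ i, hS (α i))
      = (Nat.card {T : (ℕ →₀ ℕ) × (Fin s → ℕ →₀ ℕ) //
          T.1.support.val.map (fun j => T.1 j) = mu ∧
          (∀ i, (T.2 i).sum (fun _ c => c) = α i) ∧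
          ∀ j, T.1 j + ∑ i, T.2 i j = L j} : ℚ) :=
  coeff_m_mul_prod_h_eq_card_hBrickTabloids_general mu s α L
end

section
/- For partitions λ, μ and a sequence of positive integers α = (α_1,…,α_s), the coefficient of m_λ in m_μ · e_{α_1}⋯e_{α_s} equals the number of e-brick tabloids of shape λ and extended content (μ;α): tilings as in the h-brick tabloid case (ℓ(μ) horizontal 0-bricks of lengths the parts of μ, and α_i unit bricks labeled i for each i) covering each cell of the diagram of λ exactly once, with the requirement that within each row all bricks carry distinct labels. -/
open Classical

/-- The elementary symmetric function `e_n`: the sum of all square-free monomials of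
degree `n`. -/
noncomputable def eS (n : ℕ) : MvPowerSeries ℕ ℚ :=
  fun d => if (∀ j, d j ≤ 1) ∧ d.sum (fun _ m => m) = n then 1 else 0

/-!
Both `m_μ` and `e_k` are `0/1`-indicator series of sets of monomials, so the coefficient of
`x^L` in `m_μ · e_{α_1} ⋯ e_{α_s}` counts the ways of writing `L = g + c_1 + ⋯ + c_s` with `g` a
monomial of `m_μ` and `c_i` a square-free monomial of degree `α_i`. Such a decomposition is an
e-brick tabloid: row `j` carries a `0`-brick of length `g j` and a unit brick labelled `i` exactly
when `c_i j = 1`.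
-/

open Finset

namespace MvPowerSeries

variable {σ ι R : Type*}

noncomputable def indicator [Semiring R] (S : Set (σ →₀ ℕ)) : MvPowerSeries σ R :=
  fun d => if d ∈ S then 1 else 0

theorem coeff_indicator [Semiring R] (S : Set (σ →₀ ℕ)) (d : σ →₀ ℕ) :
    coeff d (indicator S : MvPowerSeries σ R) = if d ∈ S then 1 else 0 :=
  rfl

theorem coeff_prod_indicator [CommSemiring R] [Fintype ι] (T : ι → Set (σ →₀ ℕ)) (d : σ →₀ ℕ) :
    coeff d (∏ i, indicator (T i) : MvPowerSeries σ R) =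
      Nat.card {c : ι → σ →₀ ℕ // (∀ i, c i ∈ T i) ∧ ∑ i, c i = d} := by
  rw [coeff_prod]
  simp only [coeff_indicator, prod_boole, mem_univ, true_implies]
  rw [sum_boole, ← Nat.card_eq_finsetCard]
  exact congrArg Nat.cast <| Nat.card_congr <|
    Finsupp.equivFunOnFinite.subtypeEquiv fun c => by
      simp [mem_finsuppAntidiag, and_comm]

theorem coeff_indicator_mul_prod_indicator [CommSemiring R] [Fintype ι] (S : Set (σ →₀ ℕ))
    (T : ι → Set (σ →₀ ℕ)) (d : σ →₀ ℕ) :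
    coeff d (indicator S * ∏ i, indicator (T i) : MvPowerSeries σ R) =
      Nat.card {x : (σ →₀ ℕ) × (ι → σ →₀ ℕ) //
        x.1 ∈ S ∧ (∀ i, x.2 i ∈ T i) ∧ x.1 + ∑ i, x.2 i = d} := by
  have h := coeff_prod_indicator (R := R) (fun o : Option ι => o.elim S T) d
  simp only [Fintype.prod_option, Option.elim_none, Option.elim_some] at h
  rw [h]
  exact congrArg Nat.cast <| Nat.card_congr <|
    Equiv.piOptionEquivProd.subtypeEquiv fun c => by
      simp [Fintype.sum_option, Option.forall, and_assoc]

end MvPowerSeries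

open MvPowerSeries

theorem mS_eq_indicator (mu : Multiset ℕ) :
    mS mu = indicator {d | d.support.val.map (fun j => d j) = mu} := by
  unfold mS indicator
  congr!

theorem eS_eq_indicator (n : ℕ) :
    eS n = indicator {d | (∀ j, d j ≤ 1) ∧ d.sum (fun _ m => m) = n} := by
  unfold eS indicator
  congr!

theorem coeff_m_mul_prod_e_eq_card_eBrickTabloids_general
    (mu : Multiset ℕ)
    (s : ℕ) (α : Fin s → ℕ)
    (L : ℕ →₀ ℕ) :
    MvPowerSeries.coeff L (mS mu * ∏ i, eS (α i))
      = (Nat.card {T : (ℕ →₀ ℕ) × (Fin s → ℕ →₀ ℕ) //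
          T.1.support.val.map (fun j => T.1 j) = mu ∧
          (∀ i, (T.2 i).sum (fun _ c => c) = α i) ∧
          (∀ i j, T.2 i j ≤ 1) ∧
          ∀ j, T.1 j + ∑ i, T.2 i j = L j} : ℚ) := by
  simp only [mS_eq_indicator, eS_eq_indicator, coeff_indicator_mul_prod_indicator]
  exact congrArg Nat.cast <| Nat.card_congr <| Equiv.subtypeEquivRight fun T => by
    simp only [Set.mem_ofPred_eq, forall_and, Finsupp.ext_iff, Finsupp.add_apply,
      Finsupp.finsetSum_apply]
    tauto

/-- An e-brick tabloid of shape `L` (row `j` has `L j` cells) and extended content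
`(μ; α)` is encoded by: `g : ℕ →₀ ℕ`, the length of the at most one `0`-labeled
brick in row `j` (`0` = none), and `c : Fin s → (ℕ →₀ ℕ)`, where `c i j` counts
the unit bricks labeled `i+1` in row `j`.  There are `α i` unit bricks labeled
`i+1` in total, the `0`-brick lengths form the multiset `μ`, the bricks in each
row exactly cover it, and all bricks in a row carry distinct labels
(`c i j ≤ 1`). -/
theorem coeff_m_mul_prod_e_eq_card_eBrickTabloids
    (lam mu : Multiset ℕ) (hlam : 0 ∉ lam) (hmu : 0 ∉ mu)
    (s : ℕ) (α : Fin s → ℕ) (hα : ∀ i, 0 < α i)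
    (L : ℕ →₀ ℕ) (hL : L.support.val.map (fun j => L j) = lam) :
    MvPowerSeries.coeff L (mS mu * ∏ i, eS (α i))
      = (Nat.card {T : (ℕ →₀ ℕ) × (Fin s → ℕ →₀ ℕ) //
          T.1.support.val.map (fun j => T.1 j) = mu ∧
          (∀ i, (T.2 i).sum (fun _ c => c) = α i) ∧
          (∀ i j, T.2 i j ≤ 1) ∧
          ∀ j, T.1 j + ∑ i, T.2 i j = L j} : ℚ) :=
  coeff_m_mul_prod_e_eq_card_eBrickTabloids_general mu s α L
end

section
/- A skew shape that is an r^n-polyribbon admits a unique decomposition: if μ ⊆ λ and there exist chains μ = γ_0 ⊆ γ_1 ⊆ … ⊆ γ_n = λ of partitions with each γ_i/γ_{i−1} an r-ribbon and top(γ_i/γ_{i−1}) ≥ top(γ_{i+1}/γ_i) for all 1 ≤ i ≤ n−1, then this chain is unique. -/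
open Classical

/- Partitions are represented by their row-length functions `ℕ → ℕ` (weakly
decreasing).  The cell `(i, j)` lies in the skew shape `γ/ρ` iff `ρ i ≤ j < γ i`. -/

/-- Membership of the cell `c` in the skew shape `γ/ρ`. -/
def cellMem (ρ γ : ℕ → ℕ) (c : ℕ × ℕ) : Prop := ρ c.1 ≤ c.2 ∧ c.2 < γ c.1

/-- `γ/ρ` is a `k`-ribbon. -/
def IsRibbon (ρ γ : ℕ → ℕ) (k : ℕ) : Prop :=
  (∀ i, ρ i ≤ γ i) ∧
  ∃ b : Fin k → ℕ × ℕ,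
    Function.Injective b ∧
    (∀ m, cellMem ρ γ (b m)) ∧
    (∀ c, cellMem ρ γ c → ∃ m, b m = c) ∧
    ∀ (m : Fin k) (h : (m : ℕ) + 1 < k),
      ((b ⟨(m : ℕ) + 1, h⟩).1 = (b m).1 ∧ (b m).2 = (b ⟨(m : ℕ) + 1, h⟩).2 + 1) ∨
      ((b ⟨(m : ℕ) + 1, h⟩).2 = (b m).2 ∧ (b ⟨(m : ℕ) + 1, h⟩).1 = (b m).1 + 1)

/-- `top(γ/ρ)`: the least row index containing a cell of `γ/ρ`. -/
noncomputable def topRow (ρ γ : ℕ → ℕ) : ℕ := sInf {i | ρ i < γ i}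

/-- Step property for a path recast over `ℕ`. -/
def PStep (r : ℕ) (c : ℕ → ℕ × ℕ) : Prop :=
  ∀ m, m + 1 < r →
    ((c (m+1)).1 = (c m).1 ∧ (c m).2 = (c (m+1)).2 + 1) ∨
    ((c (m+1)).2 = (c m).2 ∧ (c (m+1)).1 = (c m).1 + 1)

lemma pathMono {r : ℕ} {c : ℕ → ℕ × ℕ} (hstep : PStep r c) :
    ∀ p q, q < r → p ≤ q → (c p).1 ≤ (c q).1 ∧ (c q).2 ≤ (c p).2 := by
  intro p q
  induction q with
  | zero =>
    intro _ hpq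
    have : p = 0 := by omega
    subst this
    exact ⟨le_rfl, le_rfl⟩
  | succ q ih =>
    intro hq hpq
    rcases Nat.eq_or_lt_of_le hpq with h | h
    · subst h; exact ⟨le_rfl, le_rfl⟩
    · have h1 := ih (by omega) (by omega)
      have h2 := hstep q (by omega)
      rcases h2 with ⟨a, b2⟩ | ⟨a, b2⟩ <;> exact ⟨by omega, by omega⟩

lemma pathStart {r : ℕ} {ρ γ : ℕ → ℕ} {c : ℕ → ℕ × ℕ} (hr : 0 < r)
    (hmem : ∀ m, m < r → cellMem ρ γ (c m))
    (hsurj : ∀ x, cellMem ρ γ x → ∃ m, m < r ∧ c m = x)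
    (hstep : PStep r c) :
    c 0 = (topRow ρ γ, γ (topRow ρ γ) - 1) := by
  have h0 := hmem 0 hr
  have hne : {i | ρ i < γ i}.Nonempty := ⟨(c 0).1, lt_of_le_of_lt h0.1 h0.2⟩
  have htmem : topRow ρ γ ∈ {i | ρ i < γ i} := Nat.sInf_mem hne
  set t := topRow ρ γ with htdef
  have htt : ρ t < γ t := htmem
  have hc0 : cellMem ρ γ (t, γ t - 1) := ⟨by simp [cellMem]; omega, by simp [cellMem]; omega⟩
  obtain ⟨q, hq, hcq⟩ := hsurj _ hc0
  rcases Nat.eq_zero_or_pos q with h | h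
  · subst h; exact hcq
  · exfalso
    obtain ⟨p, rfl⟩ : ∃ p, q = p + 1 := ⟨q - 1, by omega⟩
    have hs := hstep p hq
    have hm := hmem p (by omega)
    have e1 : (c (p+1)).1 = t := by rw [hcq]
    have e2 : (c (p+1)).2 = γ t - 1 := by rw [hcq]
    rcases hs with ⟨h1, h2⟩ | ⟨h1, h2⟩
    · have e : (c p).1 = t := by omega
      have hγ : γ ((c p).1) = γ t := by rw [e]
      have := hm.2
      omega
    · -- down step: (c p).1 + 1 = t, (c p).2 = γ t - 1
      have hmemrow : (c p).1 ∈ {i | ρ i < γ i} := lt_of_le_of_lt hm.1 hm.2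
      have h3 : t ≤ (c p).1 := Nat.sInf_le hmemrow
      omega

lemma pathStepDet {r : ℕ} {ρ γ : ℕ → ℕ} {c : ℕ → ℕ × ℕ}
    (hρ : ∀ i, ρ (i+1) ≤ ρ i)
    (hmem : ∀ m, m < r → cellMem ρ γ (c m))
    (hsurj : ∀ x, cellMem ρ γ x → ∃ m, m < r ∧ c m = x)
    (hstep : PStep r c) (m : ℕ) (h : m + 1 < r) :
    ((c m).2 < γ ((c m).1 + 1) → c (m+1) = ((c m).1 + 1, (c m).2)) ∧
    (¬ (c m).2 < γ ((c m).1 + 1) → c (m+1) = ((c m).1, (c m).2 - 1)) := by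
  have hmm := hmem m (by omega)
  have hm1 := hmem (m+1) h
  constructor
  · intro hj
    have hcell : cellMem ρ γ ((c m).1 + 1, (c m).2) :=
      ⟨le_trans (hρ (c m).1) hmm.1, hj⟩
    obtain ⟨q, hq, hcq⟩ := hsurj _ hcell
    have eq1 : (c q).1 = (c m).1 + 1 := by rw [hcq]
    have eq2 : (c q).2 = (c m).2 := by rw [hcq]
    have hmq : m < q := by
      by_contra hcon
      have := pathMono hstep q m (by omega) (by omega)
      omega
    have hmono := pathMono hstep (m+1) q hq (by omega)
    rcases hstep m h with ⟨h1, h2⟩ | ⟨h1, h2⟩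
    · omega
    · exact Prod.ext h2 h1
  · intro hj
    rcases hstep m h with ⟨h1, h2⟩ | ⟨h1, h2⟩
    · refine Prod.ext h1 ?_
      simp only
      omega
    · exfalso
      have := hm1.2
      rw [h2, h1] at this
      exact hj this

lemma ribbon_unique (r : ℕ) (hr : 0 < r) (γ ρ ρ' : ℕ → ℕ)
    (hρ : ∀ i, ρ (i+1) ≤ ρ i) (hρ' : ∀ i, ρ' (i+1) ≤ ρ' i)
    (h1 : IsRibbon ρ γ r) (h2 : IsRibbon ρ' γ r)
    (ht : topRow ρ γ = topRow ρ' γ) : ρ = ρ' := by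
  obtain ⟨hle, b, hinj, hmemb, hsurjb, hstepb⟩ := h1
  obtain ⟨hle', b', hinj', hmemb', hsurjb', hstepb'⟩ := h2
  set c : ℕ → ℕ × ℕ := fun m => if h : m < r then b ⟨m, h⟩ else (0,0) with hc
  set c' : ℕ → ℕ × ℕ := fun m => if h : m < r then b' ⟨m, h⟩ else (0,0) with hc'
  have hmem : ∀ m, m < r → cellMem ρ γ (c m) := by
    intro m hm; simp only [hc, dif_pos hm]; exact hmemb _
  have hmem' : ∀ m, m < r → cellMem ρ' γ (c' m) := by
    intro m hm; simp only [hc', dif_pos hm]; exact hmemb' _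
  have hsurj : ∀ x, cellMem ρ γ x → ∃ m, m < r ∧ c m = x := by
    intro x hx
    obtain ⟨mm, hmm⟩ := hsurjb x hx
    exact ⟨mm.1, mm.2, by simp only [hc, dif_pos mm.2]; exact hmm⟩
  have hsurj' : ∀ x, cellMem ρ' γ x → ∃ m, m < r ∧ c' m = x := by
    intro x hx
    obtain ⟨mm, hmm⟩ := hsurjb' x hx
    exact ⟨mm.1, mm.2, by simp only [hc', dif_pos mm.2]; exact hmm⟩
  have hstep : PStep r c := by
    intro m hm
    have hm0 : m < r := by omega
    have H := hstepb ⟨m, hm0⟩ hm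
    simp only [hc, dif_pos hm, dif_pos hm0]
    exact H
  have hstep' : PStep r c' := by
    intro m hm
    have hm0 : m < r := by omega
    have H := hstepb' ⟨m, hm0⟩ hm
    simp only [hc', dif_pos hm, dif_pos hm0]
    exact H
  have hceq : ∀ m, m < r → c m = c' m := by
    intro m
    induction m with
    | zero =>
      intro _
      rw [pathStart hr hmem hsurj hstep, pathStart hr hmem' hsurj' hstep', ht]
    | succ m ih =>
      intro hm1
      have hm : m < r := by omega
      have e := ih hm
      have d1 := pathStepDet hρ hmem hsurj hstep m hm1
      have d2 := pathStepDet hρ' hmem' hsurj' hstep' m hm1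
      by_cases hj : (c m).2 < γ ((c m).1 + 1)
      · rw [d1.1 hj, d2.1 (by rw [← e]; exact hj), e]
      · rw [d1.2 hj, d2.2 (by rw [← e]; exact hj), e]
  have hcellequiv : ∀ x, cellMem ρ γ x ↔ cellMem ρ' γ x := by
    intro x
    constructor
    · intro hx
      obtain ⟨m, hm, hcm⟩ := hsurj x hx
      have := hmem' m hm
      rwa [← hceq m hm, hcm] at this
    · intro hx
      obtain ⟨m, hm, hcm⟩ := hsurj' x hx
      have := hmem m hm
      rwa [hceq m hm, hcm] at this
  funext i
  have A : ρ i < γ i → ρ' i ≤ ρ i := fun h => ((hcellequiv (i, ρ i)).1 ⟨le_rfl, h⟩).1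
  have B : ρ' i < γ i → ρ i ≤ ρ' i := fun h => ((hcellequiv (i, ρ' i)).2 ⟨le_rfl, h⟩).1
  have := hle i
  have := hle' i
  omega

lemma chain_top (r n : ℕ) (hr : 0 < r) (γ : ℕ → ℕ → ℕ)
    (hrib : ∀ i < n + 1, IsRibbon (γ i) (γ (i+1)) r)
    (htop : ∀ i, i + 1 < n + 1 → topRow (γ (i+1)) (γ (i+2)) ≤ topRow (γ i) (γ (i+1))) :
    topRow (γ n) (γ (n+1)) = topRow (γ 0) (γ (n+1)) := by
  have hle : ∀ k, k ≤ n → ∀ i, γ k i ≤ γ (k+1) i := fun k hk => (hrib k (by omega)).1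
  have hne : ∀ k, k ≤ n → ∃ i, γ k i < γ (k+1) i := by
    intro k hk
    obtain ⟨_, b, _, hmemb, _⟩ := hrib k (by omega)
    exact ⟨(b ⟨0, hr⟩).1, lt_of_le_of_lt (hmemb ⟨0, hr⟩).1 (hmemb ⟨0, hr⟩).2⟩
  have h0le : ∀ k, k ≤ n + 1 → ∀ i, γ 0 i ≤ γ k i := by
    intro k
    induction k with
    | zero => intro _ i; exact le_rfl
    | succ k ih => intro hk i; exact le_trans (ih (by omega) i) (hle k (by omega) i)
  have tops_anti : ∀ p q, p ≤ q → q ≤ n →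
      topRow (γ q) (γ (q+1)) ≤ topRow (γ p) (γ (p+1)) := by
    intro p q hpq
    induction q with
    | zero =>
      intro _
      have : p = 0 := by omega
      subst this; exact le_rfl
    | succ q ih =>
      intro hq
      rcases Nat.eq_or_lt_of_le hpq with h | h
      · subst h; exact le_rfl
      · exact le_trans (htop q (by omega)) (ih (by omega) (by omega))
  obtain ⟨i0, hi0⟩ := hne n (le_refl n)
  have hneN : {i | γ n i < γ (n+1) i}.Nonempty := ⟨i0, hi0⟩
  have hne0 : {i | γ 0 i < γ (n+1) i}.Nonempty :=
    ⟨i0, lt_of_le_of_lt (h0le n (by omega) i0) hi0⟩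
  apply le_antisymm
  · -- topRow (γ n) (γ (n+1)) ≤ topRow (γ 0) (γ (n+1))
    have ht0 : γ 0 (topRow (γ 0) (γ (n+1))) < γ (n+1) (topRow (γ 0) (γ (n+1))) :=
      Nat.sInf_mem hne0
    set t0 := topRow (γ 0) (γ (n+1)) with ht0def
    have hstepk : ∃ k, k ≤ n ∧ γ k t0 < γ (k+1) t0 := by
      by_contra hcon
      push_neg at hcon
      have hall : ∀ k, k ≤ n + 1 → γ k t0 ≤ γ 0 t0 := by
        intro k
        induction k with
        | zero => intro _; exact le_rfl
        | succ k ih =>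
          intro hk
          exact le_trans (hcon k (by omega)) (ih (by omega))
      have := hall (n+1) (le_refl _)
      omega
    obtain ⟨k, hk, hkt⟩ := hstepk
    exact le_trans (tops_anti k n hk (le_refl n)) (Nat.sInf_le hkt)
  · have hT : γ n (topRow (γ n) (γ (n+1))) < γ (n+1) (topRow (γ n) (γ (n+1))) :=
      Nat.sInf_mem hneN
    exact Nat.sInf_le (show γ 0 _ < γ (n+1) _ from
      lt_of_le_of_lt (h0le n (by omega) _) hT)


/-- Uniqueness of the decomposition of an `r^n`-polyribbon: if two chains of
partitions `μ = γ_0 ⊆ … ⊆ γ_n = λ` both consist of successive `r`-ribbons whose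
top rows weakly move up (`top(γ_i/γ_{i−1}) ≥ top(γ_{i+1}/γ_i)`), then the two
chains coincide. -/
theorem polyribbon_decomposition_unique (r n : ℕ) (hr : 0 < r)
    (mu lam : ℕ → ℕ) (γ γ' : ℕ → ℕ → ℕ)
    (hpart : ∀ i j, γ i (j + 1) ≤ γ i j)
    (hpart' : ∀ i j, γ' i (j + 1) ≤ γ' i j)
    (h0 : γ 0 = mu) (hn : γ n = lam)
    (h0' : γ' 0 = mu) (hn' : γ' n = lam)
    (hrib : ∀ i < n, IsRibbon (γ i) (γ (i + 1)) r)
    (hrib' : ∀ i < n, IsRibbon (γ' i) (γ' (i + 1)) r)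
    (htop : ∀ i, i + 1 < n → topRow (γ (i + 1)) (γ (i + 2)) ≤ topRow (γ i) (γ (i + 1)))
    (htop' : ∀ i, i + 1 < n → topRow (γ' (i + 1)) (γ' (i + 2)) ≤ topRow (γ' i) (γ' (i + 1))) :
    ∀ i ≤ n, γ i = γ' i := by
  induction n generalizing mu lam γ γ' with
  | zero =>
    intro i hi
    have : i = 0 := by omega
    subst this
    rw [h0, h0']
  | succ n IH =>
    have key := chain_top r n hr γ hrib htop
    have key' := chain_top r n hr γ' hrib' htop'
    rw [h0, hn] at key
    rw [h0', hn'] at key'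
    have hrn : IsRibbon (γ n) lam r := by rw [← hn]; exact hrib n (by omega)
    have hrn' : IsRibbon (γ' n) lam r := by rw [← hn']; exact hrib' n (by omega)
    have httop : topRow (γ n) lam = topRow (γ' n) lam := key.trans key'.symm
    have heq : γ n = γ' n :=
      ribbon_unique r hr lam (γ n) (γ' n) (hpart n) (hpart' n) hrn hrn' httop
    have hind := IH mu (γ n) γ γ' hpart hpart' h0 rfl h0' heq.symm
      (fun i hi => hrib i (by omega)) (fun i hi => hrib' i (by omega))
      (fun i hi => htop i (by omega)) (fun i hi => htop' i (by omega))
    intro i hi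
    rcases Nat.lt_or_ge i (n+1) with h | h
    · exact hind i (by omega)
    · have : i = n + 1 := by omega
      subst this
      rw [hn, hn']
end

section
/- A skew shape λ/μ is an r^n-polyribbon if and only if the conjugate skew shape λ′/μ′ is a dual r^n-polyribbon, where in a dual polyribbon the chain condition on top rows is replaced by the condition bot(γ_i/γ_{i−1}) ≥ bot(γ_{i+1}/γ_i) on leftmost occupied columns. -/
open Classical

/-- `bot(γ/ρ)`: the least column index containing a cell of `γ/ρ`. -/
noncomputable def botCol (ρ γ : ℕ → ℕ) : ℕ := sInf {j | ∃ i, ρ i ≤ j ∧ j < γ i}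

/-- `λ/μ` is an `r^n`-polyribbon: there is a chain `μ = γ_0 ⊆ … ⊆ γ_n = λ` of
partitions with each `γ_{i+1}/γ_i` an `r`-ribbon and the top rows satisfying
`top(γ_i/γ_{i−1}) ≥ top(γ_{i+1}/γ_i)`. -/
def IsPolyribbon (r n : ℕ) (mu lam : ℕ → ℕ) : Prop :=
  ∃ γ : ℕ → ℕ → ℕ,
    (∀ i j, γ i (j + 1) ≤ γ i j) ∧ γ 0 = mu ∧ γ n = lam ∧
    (∀ i < n, IsRibbon (γ i) (γ (i + 1)) r) ∧
    ∀ i, i + 1 < n → topRow (γ (i + 1)) (γ (i + 2)) ≤ topRow (γ i) (γ (i + 1))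

/-- `λ/μ` is a dual `r^n`-polyribbon: as above but with the chain condition on
leftmost occupied columns, `bot(γ_i/γ_{i−1}) ≥ bot(γ_{i+1}/γ_i)`. -/
def IsDualPolyribbon (r n : ℕ) (mu lam : ℕ → ℕ) : Prop :=
  ∃ γ : ℕ → ℕ → ℕ,
    (∀ i j, γ i (j + 1) ≤ γ i j) ∧ γ 0 = mu ∧ γ n = lam ∧
    (∀ i < n, IsRibbon (γ i) (γ (i + 1)) r) ∧
    ∀ i, i + 1 < n → botCol (γ (i + 1)) (γ (i + 2)) ≤ botCol (γ i) (γ (i + 1))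

/-- The conjugate (transpose) partition: `λ' j = #{i | λ i > j}`, computed as the
least `i` with `λ i ≤ j` (for weakly decreasing `λ`). -/
noncomputable def conj (lam : ℕ → ℕ) : ℕ → ℕ := fun j => sInf {i | lam i ≤ j}

lemma conj_le_iff (hdec : ∀ j, lam (j + 1) ≤ lam j) (h0 : ∃ N, lam N = 0) (i j : ℕ) :
    conj lam j ≤ i ↔ lam i ≤ j := by
  have hanti : Antitone lam := antitone_nat_of_succ_le hdec
  obtain ⟨N, hN⟩ := h0
  have hne : {k | lam k ≤ j}.Nonempty := ⟨N, by simp [hN]⟩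
  constructor
  · intro h
    have hmem : lam (sInf {k | lam k ≤ j}) ≤ j := Nat.sInf_mem hne
    exact le_trans (hanti h) hmem
  · intro h
    exact Nat.sInf_le h

lemma lt_conj_iff (hdec : ∀ j, lam (j + 1) ≤ lam j) (h0 : ∃ N, lam N = 0) (i j : ℕ) :
    i < conj lam j ↔ j < lam i := by
  rw [← Nat.not_le, ← Nat.not_le]
  exact not_congr (conj_le_iff hdec h0 i j)

lemma conj_dec (hdec : ∀ j, lam (j + 1) ≤ lam j) (h0 : ∃ N, lam N = 0) (j : ℕ) :
    conj lam (j + 1) ≤ conj lam j := by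
  obtain ⟨N, hN⟩ := h0
  have hne : {k | lam k ≤ j}.Nonempty := ⟨N, by simp [hN]⟩
  have hmem : lam (sInf {k | lam k ≤ j}) ≤ j := Nat.sInf_mem hne
  exact Nat.sInf_le (le_trans hmem (Nat.le_succ j))

lemma conj_zero (lam : ℕ → ℕ) : ∃ N, conj lam N = 0 :=
  ⟨lam 0, Nat.sInf_eq_zero.mpr (Or.inl (by simp))⟩

lemma conj_conj (hdec : ∀ j, lam (j + 1) ≤ lam j) (h0 : ∃ N, lam N = 0) :
    conj (conj lam) = lam := by
  funext i
  have hset : {j | conj lam j ≤ i} = {j | lam i ≤ j} := by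
    ext j; exact conj_le_iff hdec h0 i j
  show sInf {j | conj lam j ≤ i} = lam i
  rw [hset]
  have h1 : sInf {j | lam i ≤ j} ≤ lam i := Nat.sInf_le (by simp)
  have h2 : lam i ≤ sInf {j | lam i ≤ j} := Nat.sInf_mem ⟨lam i, by simp⟩
  omega

lemma conj_mono (hle : ∀ i, ρ i ≤ γ i) (hγ0 : ∃ N, γ N = 0) (j : ℕ) :
    conj ρ j ≤ conj γ j := by
  obtain ⟨N, hN⟩ := hγ0
  have hne : {k | γ k ≤ j}.Nonempty := ⟨N, by simp [hN]⟩
  have hmem : γ (sInf {k | γ k ≤ j}) ≤ j := Nat.sInf_mem hne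
  exact Nat.sInf_le (le_trans (hle _) hmem)

lemma cellMem_conj (hρdec : ∀ j, ρ (j + 1) ≤ ρ j) (hρ0 : ∃ N, ρ N = 0)
    (hγdec : ∀ j, γ (j + 1) ≤ γ j) (hγ0 : ∃ N, γ N = 0) (c : ℕ × ℕ) :
    cellMem (conj ρ) (conj γ) (c.2, c.1) ↔ cellMem ρ γ c := by
  unfold cellMem
  rw [conj_le_iff hρdec hρ0, lt_conj_iff hγdec hγ0]

lemma topRow_conj (hρdec : ∀ j, ρ (j + 1) ≤ ρ j) (hρ0 : ∃ N, ρ N = 0)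
    (hγdec : ∀ j, γ (j + 1) ≤ γ j) (hγ0 : ∃ N, γ N = 0) :
    topRow (conj ρ) (conj γ) = botCol ρ γ := by
  unfold topRow botCol
  congr 1
  ext j
  simp only [Set.mem_setOf_eq]
  constructor
  · intro h
    exact ⟨conj ρ j, (conj_le_iff hρdec hρ0 _ j).mp le_rfl,
      (lt_conj_iff hγdec hγ0 _ j).mp h⟩
  · rintro ⟨i, h1, h2⟩
    exact lt_of_le_of_lt ((conj_le_iff hρdec hρ0 i j).mpr h1)
      ((lt_conj_iff hγdec hγ0 i j).mpr h2)

lemma botCol_conj (hρdec : ∀ j, ρ (j + 1) ≤ ρ j) (hρ0 : ∃ N, ρ N = 0)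
    (hγdec : ∀ j, γ (j + 1) ≤ γ j) (hγ0 : ∃ N, γ N = 0) :
    botCol (conj ρ) (conj γ) = topRow ρ γ := by
  have h := topRow_conj (conj_dec hρdec hρ0) (conj_zero ρ)
    (conj_dec hγdec hγ0) (conj_zero γ)
  rw [conj_conj hρdec hρ0, conj_conj hγdec hγ0] at h
  exact h.symm

lemma ribbon_conj {ρ γ : ℕ → ℕ} (hρdec : ∀ j, ρ (j + 1) ≤ ρ j) (hρ0 : ∃ N, ρ N = 0)
    (hγdec : ∀ j, γ (j + 1) ≤ γ j) (hγ0 : ∃ N, γ N = 0) {k : ℕ}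
    (h : IsRibbon ρ γ k) : IsRibbon (conj ρ) (conj γ) k := by
  obtain ⟨hle, b, hinj, hmem, hsurj, hadj⟩ := h
  refine ⟨conj_mono hle hγ0, fun m => Prod.swap (b m.rev), ?_, ?_, ?_, ?_⟩
  · intro m1 m2 h12
    have h1 : b m1.rev = b m2.rev := Prod.swap_injective h12
    exact Fin.rev_injective (hinj h1)
  · intro m
    have hm := hmem m.rev
    exact (cellMem_conj hρdec hρ0 hγdec hγ0 (b m.rev)).mpr hm
  · intro c hc
    have hc' : cellMem ρ γ c.swap := by
      refine (cellMem_conj hρdec hρ0 hγdec hγ0 c.swap).mp ?_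
      simpa using hc
    obtain ⟨m, hm⟩ := hsurj _ hc'
    refine ⟨m.rev, ?_⟩
    simp only [Fin.rev_rev, hm, Prod.swap_swap]
  · intro m h
    have hk1 : (1 : ℕ) ≤ k := by omega
    have h' : ((Fin.rev (⟨(m : ℕ) + 1, h⟩ : Fin k)) : ℕ) + 1 < k := by
      simp only [Fin.val_rev]
      omega
    have key := hadj (Fin.rev (⟨(m : ℕ) + 1, h⟩ : Fin k)) h'
    have hrw : (⟨((Fin.rev (⟨(m : ℕ) + 1, h⟩ : Fin k)) : ℕ) + 1, h'⟩ : Fin k) = m.rev := by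
      apply Fin.ext
      simp only [Fin.val_rev]
      have := m.isLt
      omega
    rw [hrw] at key
    rcases key with ⟨h1, h2⟩ | ⟨h1, h2⟩
    · exact Or.inr ⟨h1.symm, h2⟩
    · exact Or.inl ⟨h1.symm, h2⟩

lemma chain_zero {r n : ℕ} {lam : ℕ → ℕ} {γ : ℕ → ℕ → ℕ}
    (hn : γ n = lam) (hrib : ∀ i < n, IsRibbon (γ i) (γ (i + 1)) r)
    (hlam0 : ∃ N, lam N = 0) : ∀ i ≤ n, ∃ N, γ i N = 0 := by
  obtain ⟨N, hN⟩ := hlam0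
  intro i hi
  refine ⟨N, ?_⟩
  have H : ∀ m, i + m ≤ n → γ i N ≤ γ (i + m) N := by
    intro m
    induction m with
    | zero => intro _; simp
    | succ m ih =>
      intro hm
      have hs := (hrib (i + m) (by omega)).1 N
      exact le_trans (ih (by omega)) hs
  have := H (n - i) (by omega)
  rw [show i + (n - i) = n by omega, hn, hN] at this
  omega

lemma poly_to_dual (r n : ℕ) (mu lam : ℕ → ℕ) (hlam0 : ∃ N, lam N = 0) :
    IsPolyribbon r n mu lam → IsDualPolyribbon r n (conj mu) (conj lam) := by
  rintro ⟨γ, hdec, h0, hn, hrib, htop⟩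
  have hz : ∀ i ≤ n, ∃ N, γ i N = 0 := chain_zero hn hrib hlam0
  refine ⟨fun i => conj (γ (min i n)), ?_, ?_, ?_, ?_, ?_⟩
  · intro i j
    exact conj_dec (hdec _) (hz _ (min_le_right _ _)) j
  · show conj (γ (min 0 n)) = conj mu
    rw [Nat.zero_min, h0]
  · show conj (γ (min n n)) = conj lam
    rw [Nat.min_self, hn]
  · intro i hi
    show IsRibbon (conj (γ (min i n))) (conj (γ (min (i + 1) n))) r
    rw [min_eq_left (le_of_lt hi), min_eq_left hi]
    exact ribbon_conj (hdec i) (hz i (le_of_lt hi)) (hdec (i + 1)) (hz (i + 1) hi)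
      (hrib i hi)
  · intro i hi
    show botCol (conj (γ (min (i + 1) n))) (conj (γ (min (i + 2) n))) ≤
      botCol (conj (γ (min i n))) (conj (γ (min (i + 1) n)))
    rw [min_eq_left (by omega : i ≤ n), min_eq_left (by omega : i + 1 ≤ n),
      min_eq_left (by omega : i + 2 ≤ n)]
    rw [botCol_conj (hdec i) (hz i (by omega)) (hdec (i + 1)) (hz (i + 1) (by omega)),
      botCol_conj (hdec (i + 1)) (hz (i + 1) (by omega)) (hdec (i + 2)) (hz (i + 2) (by omega))]
    exact htop i hi

lemma dual_to_poly (r n : ℕ) (mu lam : ℕ → ℕ) (hlam0 : ∃ N, lam N = 0) :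
    IsDualPolyribbon r n mu lam → IsPolyribbon r n (conj mu) (conj lam) := by
  rintro ⟨γ, hdec, h0, hn, hrib, hbot⟩
  have hz : ∀ i ≤ n, ∃ N, γ i N = 0 := chain_zero hn hrib hlam0
  refine ⟨fun i => conj (γ (min i n)), ?_, ?_, ?_, ?_, ?_⟩
  · intro i j
    exact conj_dec (hdec _) (hz _ (min_le_right _ _)) j
  · show conj (γ (min 0 n)) = conj mu
    rw [Nat.zero_min, h0]
  · show conj (γ (min n n)) = conj lam
    rw [Nat.min_self, hn]
  · intro i hi
    show IsRibbon (conj (γ (min i n))) (conj (γ (min (i + 1) n))) r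
    rw [min_eq_left (le_of_lt hi), min_eq_left hi]
    exact ribbon_conj (hdec i) (hz i (le_of_lt hi)) (hdec (i + 1)) (hz (i + 1) hi)
      (hrib i hi)
  · intro i hi
    show topRow (conj (γ (min (i + 1) n))) (conj (γ (min (i + 2) n))) ≤
      topRow (conj (γ (min i n))) (conj (γ (min (i + 1) n)))
    rw [min_eq_left (by omega : i ≤ n), min_eq_left (by omega : i + 1 ≤ n),
      min_eq_left (by omega : i + 2 ≤ n)]
    rw [topRow_conj (hdec i) (hz i (by omega)) (hdec (i + 1)) (hz (i + 1) (by omega)),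
      topRow_conj (hdec (i + 1)) (hz (i + 1) (by omega)) (hdec (i + 2)) (hz (i + 2) (by omega))]
    exact hbot i hi


/-- `λ/μ` is an `r^n`-polyribbon iff the conjugate skew shape `λ'/μ'` is a dual
`r^n`-polyribbon. -/
theorem polyribbon_iff_conj_dualPolyribbon (r n : ℕ) (hr : 0 < r)
    (mu lam : ℕ → ℕ)
    (hmu : ∀ j, mu (j + 1) ≤ mu j) (hlam : ∀ j, lam (j + 1) ≤ lam j)
    (hmu0 : ∃ N, mu N = 0) (hlam0 : ∃ N, lam N = 0)
    (hsub : ∀ i, mu i ≤ lam i) :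
    IsPolyribbon r n mu lam ↔ IsDualPolyribbon r n (conj mu) (conj lam) := by
  constructor
  · exact poly_to_dual r n mu lam hlam0
  · intro h
    have := dual_to_poly r n (conj mu) (conj lam) (conj_zero lam) h
    rwa [conj_conj hmu hmu0, conj_conj hlam hlam0] at this
end
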